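/- arXiv:2006.05101 — 3 statements merged into one kernel-verified Lean document; each statement's English description precedes it below -/
import Mathlib

section
/- Let d be sufficiently large, ℓ = ⌊ln d / ln ln d⌋, and p = 1/d. Then q := C(d, ℓ) p^ℓ (1 - p)^(d - ℓ) satisfies q ≥ 0.35 p. -/
/-- `(n/k)^k ≤ C(n,k)` in the form `n^k ≤ k^k * C(n,k)`. -/
lemma aux_pow_le_choose : ∀ (k n : ℕ), k ≤ n → n ^ k ≤ k ^ k * n.choose k := by
  intro k
  induction k with
  | zero => intro n _; simp
  | succ k ih =>
    intro n hn
    obtain ⟨m, rfl⟩ : ∃ m, n = m + 1 := ⟨n - 1, (Nat.succ_pred_eq_of_pos (by omega)).symm⟩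
    have hk : k ≤ m := by omega
    have key : (m + 1) ^ k ≤ (k + 1) ^ k * m.choose k := by
      rcases Nat.eq_zero_or_pos k with h0 | hpos
      · subst h0; simp
      · have h1 : (m + 1) * k ≤ m * (k + 1) := by
          calc (m + 1) * k = m * k + k := by ring
            _ ≤ m * k + m := Nat.add_le_add_left hk _
            _ = m * (k + 1) := by ring
        have h3 : (m + 1) ^ k * k ^ k ≤ m ^ k * (k + 1) ^ k := by
          calc (m + 1) ^ k * k ^ k = ((m + 1) * k) ^ k := (Nat.mul_pow _ _ _).symm
            _ ≤ (m * (k + 1)) ^ k := Nat.pow_le_pow_left h1 k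
            _ = m ^ k * (k + 1) ^ k := Nat.mul_pow _ _ _
        have h4 := ih m hk
        have hkk : 0 < k ^ k := Nat.pow_pos hpos
        have h6 : k ^ k * (m + 1) ^ k ≤ k ^ k * ((k + 1) ^ k * m.choose k) := by
          calc k ^ k * (m + 1) ^ k = (m + 1) ^ k * k ^ k := Nat.mul_comm _ _
            _ ≤ m ^ k * (k + 1) ^ k := h3
            _ ≤ (k ^ k * m.choose k) * (k + 1) ^ k := Nat.mul_le_mul_right _ h4
            _ = k ^ k * ((k + 1) ^ k * m.choose k) := by ring
        exact Nat.le_of_mul_le_mul_left h6 hkk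
    calc (m + 1) ^ (k + 1) = (m + 1) * (m + 1) ^ k := by ring
      _ ≤ (m + 1) * ((k + 1) ^ k * m.choose k) := Nat.mul_le_mul_left _ key
      _ = (k + 1) ^ k * ((m + 1) * m.choose k) := by ring
      _ = (k + 1) ^ k * ((m + 1).choose (k + 1) * (k + 1)) := by
          rw [Nat.add_one_mul_choose_eq]
      _ = (k + 1) ^ (k + 1) * (m + 1).choose (k + 1) := by ring

set_option maxHeartbeats 800000 in
/-- For sufficiently large `d`, with `ℓ = ⌊ln d / ln ln d⌋` and `p = 1/d`, the binomial
point probability `q = C(d,ℓ) p^ℓ (1-p)^(d-ℓ)` satisfies `q ≥ 0.35 p`. -/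
theorem stmt_3 : ∃ D : ℕ, ∀ d : ℕ, D ≤ d →
    ∀ ℓ : ℕ, ℓ = ⌊Real.log d / Real.log (Real.log d)⌋₊ →
    ∀ p : ℝ, p = 1 / (d : ℝ) →
    0.35 * p ≤ (d.choose ℓ : ℝ) * p ^ ℓ * (1 - p) ^ (d - ℓ) := by
  refine ⟨200, fun d hd ℓ hℓ p hp => ?_⟩
  have hd200 : (200 : ℝ) ≤ (d : ℝ) := by exact_mod_cast hd
  have hd0 : (0 : ℝ) < d := by linarith
  -- log d ≥ 3
  have hexp1 : Real.exp 1 < 2.7182818286 := Real.exp_one_lt_d9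
  have hexp3 : Real.exp 3 ≤ (d : ℝ) := by
    have h0 : Real.exp 3 = (Real.exp 1) ^ (3 : ℕ) := by
      rw [← Real.exp_nat_mul]; norm_num
    rw [h0]
    have h1 : (Real.exp 1) ^ (3 : ℕ) ≤ 2.7182818286 ^ (3 : ℕ) :=
      pow_le_pow_left₀ (Real.exp_pos 1).le hexp1.le 3
    nlinarith
  have hlogd3 : (3 : ℝ) ≤ Real.log d := by
    calc (3 : ℝ) = Real.log (Real.exp 3) := (Real.log_exp 3).symm
      _ ≤ Real.log d := Real.log_le_log (Real.exp_pos 3) hexp3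
  have hlogd0 : (0 : ℝ) < Real.log d := by linarith
  have hexp1' : Real.exp 1 ≤ Real.log d := by nlinarith
  have hll1 : (1 : ℝ) ≤ Real.log (Real.log d) := by
    calc (1 : ℝ) = Real.log (Real.exp 1) := (Real.log_exp 1).symm
      _ ≤ Real.log (Real.log d) := Real.log_le_log (Real.exp_pos 1) hexp1'
  have hll0 : (0 : ℝ) < Real.log (Real.log d) := by linarith
  set L : ℝ := Real.log d / Real.log (Real.log d) with hL
  have hL0 : 0 ≤ L := div_nonneg hlogd0.le hll0.le
  have hℓL : (ℓ : ℝ) ≤ L := by rw [hℓ]; exact Nat.floor_le hL0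
  have hℓlogd : (ℓ : ℝ) ≤ Real.log d := hℓL.trans (div_le_self hlogd0.le hll1)
  have hL1 : (1 : ℝ) ≤ L := by
    rw [hL, le_div_iff₀ hll0, one_mul]
    have := Real.log_le_sub_one_of_pos hlogd0
    linarith
  have hℓ1 : 1 ≤ ℓ := by rw [hℓ]; exact Nat.le_floor (by exact_mod_cast hL1)
  have hℓ1' : (1 : ℝ) ≤ (ℓ : ℝ) := by exact_mod_cast hℓ1
  have hℓd : ℓ ≤ d := by
    have h0 : (ℓ : ℝ) ≤ (d : ℝ) := by
      have := Real.log_le_sub_one_of_pos hd0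
      linarith
    exact_mod_cast h0
  -- key1 : ℓ^ℓ ≤ d
  have hA0 : (0 : ℝ) < (ℓ : ℝ) ^ ℓ := by positivity
  have key1 : ((ℓ : ℝ)) ^ ℓ ≤ (d : ℝ) := by
    have hlogℓ : Real.log ℓ ≤ Real.log (Real.log d) :=
      Real.log_le_log (by linarith) hℓlogd
    have hmul : (ℓ : ℝ) * Real.log ℓ ≤ Real.log d := by
      calc (ℓ : ℝ) * Real.log ℓ ≤ (ℓ : ℝ) * Real.log (Real.log d) :=
            mul_le_mul_of_nonneg_left hlogℓ (by linarith)
        _ ≤ L * Real.log (Real.log d) := mul_le_mul_of_nonneg_right hℓL hll0.le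
        _ = Real.log d := div_mul_cancel₀ _ hll0.ne'
    calc ((ℓ : ℝ)) ^ ℓ = Real.exp (Real.log (((ℓ : ℝ)) ^ ℓ)) := (Real.exp_log hA0).symm
      _ = Real.exp ((ℓ : ℝ) * Real.log ℓ) := by rw [Real.log_pow]
      _ ≤ Real.exp (Real.log d) := Real.exp_le_exp.mpr hmul
      _ = (d : ℝ) := Real.exp_log hd0
  -- key2 : 0.35 ≤ (1-p)^d
  have hp0 : 0 < p := by rw [hp]; positivity
  have hp1 : p ≤ 1 / 200 := by
    rw [hp]
    apply div_le_div_of_nonneg_left (by norm_num) (by norm_num) hd200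
  have key2 : (0.35 : ℝ) ≤ (1 - p) ^ d := by
    set x : ℝ := 1 / ((d : ℝ) - 1) with hx
    have hx0 : 0 < x := by rw [hx]; exact div_pos one_pos (by linarith)
    have hex : (0 : ℝ) < Real.exp x := Real.exp_pos x
    have h2 : x + 1 ≤ Real.exp x := Real.add_one_le_exp x
    have h1 : Real.exp (-x) ≤ 1 - p := by
      have h4 : (1 : ℝ) ≤ (1 - p) * Real.exp x := by
        have hq : (1 - p) = ((d : ℝ) - 1) / d := by rw [hp]; field_simp
        rw [hq, div_mul_eq_mul_div, le_div_iff₀ hd0]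
        have hne : ((d : ℝ) - 1) ≠ 0 := ne_of_gt (by linarith)
        have hx' : x * ((d : ℝ) - 1) = 1 := by
          rw [hx, one_div, inv_mul_cancel₀ hne]
        nlinarith
      have hinv : Real.exp (-x) * Real.exp x = 1 := by rw [← Real.exp_add]; ring_nf; exact Real.exp_zero
      nlinarith
    have h6 : Real.exp (-x) ^ d ≤ (1 - p) ^ d :=
      pow_le_pow_left₀ (Real.exp_pos _).le h1 d
    have h7 : Real.exp (-x) ^ d = Real.exp ((d : ℝ) * (-x)) := (Real.exp_nat_mul _ d).symm
    have h8 : (-1.01 : ℝ) ≤ (d : ℝ) * (-x) := by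
      have h9 : (d : ℝ) * x ≤ 1.01 := by
        rw [hx, mul_one_div, div_le_iff₀ (by linarith)]
        linarith
      nlinarith
    have h10 : (0.35 : ℝ) ≤ Real.exp (-1.01) := by
      have h99 : (0.99 : ℝ) ≤ Real.exp (-0.01) := by
        linarith [Real.add_one_le_exp (-0.01 : ℝ)]
      have e101 : Real.exp 1.01 * 0.99 ≤ 2.7182818286 := by
        have hm : Real.exp 1.01 * Real.exp (-0.01) = Real.exp 1 := by
          rw [← Real.exp_add]; norm_num
        nlinarith [Real.exp_pos (1.01 : ℝ)]
      have hinv : Real.exp (-1.01 : ℝ) * Real.exp (1.01 : ℝ) = 1 := by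
        rw [← Real.exp_add]; norm_num
      nlinarith [Real.exp_pos (1.01 : ℝ)]
    calc (0.35 : ℝ) ≤ Real.exp (-1.01) := h10
      _ ≤ Real.exp ((d : ℝ) * (-x)) := Real.exp_le_exp.mpr h8
      _ = Real.exp (-x) ^ d := h7.symm
      _ ≤ (1 - p) ^ d := h6
  -- choose bound
  have key3 : (d : ℝ) ^ ℓ ≤ (ℓ : ℝ) ^ ℓ * (d.choose ℓ : ℝ) := by
    exact_mod_cast aux_pow_le_choose ℓ d hℓd
  have hdl0 : (0 : ℝ) < (d : ℝ) ^ ℓ := by positivity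
  have hfrac : 1 / ((ℓ : ℝ) ^ ℓ) ≤ (d.choose ℓ : ℝ) / (d : ℝ) ^ ℓ := by
    rw [div_le_div_iff₀ hA0 hdl0]
    nlinarith
  have hCp : (d.choose ℓ : ℝ) / (d : ℝ) ^ ℓ = (d.choose ℓ : ℝ) * p ^ ℓ := by
    rw [hp, div_pow, div_eq_mul_inv, div_eq_mul_inv]; ring
  have h1p0 : (0 : ℝ) ≤ 1 - p := by linarith
  have hpow : (1 - p) ^ d ≤ (1 - p) ^ (d - ℓ) :=
    pow_le_pow_of_le_one h1p0 (by linarith) (Nat.sub_le d ℓ)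
  have hpd0 : (0 : ℝ) ≤ (1 - p) ^ d := by positivity
  have hCppos : (0 : ℝ) ≤ (d.choose ℓ : ℝ) * p ^ ℓ :=
    mul_nonneg (Nat.cast_nonneg _) (pow_nonneg hp0.le _)
  calc (0.35 : ℝ) * p = 0.35 / d := by rw [hp]; ring
    _ ≤ 0.35 / ((ℓ : ℝ) ^ ℓ) := div_le_div_of_nonneg_left (by norm_num) hA0 key1
    _ = (1 / ((ℓ : ℝ) ^ ℓ)) * 0.35 := by ring
    _ ≤ (1 / ((ℓ : ℝ) ^ ℓ)) * ((1 - p) ^ d) :=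
        mul_le_mul_of_nonneg_left key2 (by positivity)
    _ ≤ ((d.choose ℓ : ℝ) / (d : ℝ) ^ ℓ) * ((1 - p) ^ d) :=
        mul_le_mul_of_nonneg_right hfrac hpd0
    _ = (d.choose ℓ : ℝ) * p ^ ℓ * (1 - p) ^ d := by rw [hCp]
    _ ≤ (d.choose ℓ : ℝ) * p ^ ℓ * (1 - p) ^ (d - ℓ) :=
        mul_le_mul_of_nonneg_left hpow hCppos
end

section
/- Let G be a triangle-free graph with a linear ordering of its vertices such that every vertex has at most d left-neighbors. Let X be a p-random subset of vertices and let I be the set of vertices of X having no left-neighbor in X. Fix a vertex y, a set N_y ⊆ N_G(y) of size d, and a subset L ⊆ N_y of size ℓ. Then, conditioned on the event X ∩ N_y = L, for each x ∈ L the probability that x ∈ I is at least (1 - p)^d. -/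
/-- The probability that a `p`-random subset of `V` satisfies the event `E`. -/
def prSet (V : Type*) [Fintype V] [DecidableEq V] (p : ℝ)
    (E : Finset V → Prop) [DecidablePred E] : ℝ :=
  ∑ X ∈ (Finset.univ : Finset V).powerset,
    if E X then p ^ X.card * (1 - p) ^ (Fintype.card V - X.card) else 0

lemma prSet_congr {V : Type*} [Fintype V] [DecidableEq V] (p : ℝ)
    (E F : Finset V → Prop) [DecidablePred E] [DecidablePred F]
    (h : ∀ X, E X ↔ F X) : prSet V p E = prSet V p F := by
  unfold prSet
  exact Finset.sum_congr rfl fun X _ => by rw [if_congr (h X) rfl rfl]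

lemma sum_weight_one {V : Type*} [DecidableEq V] (p : ℝ) (C : Finset V) :
    ∑ Y ∈ C.powerset, p ^ Y.card * (1 - p) ^ (C.card - Y.card) = 1 := by
  have h := Finset.prod_add (fun _ : V => p) (fun _ : V => (1 - p)) C
  simp only [Finset.prod_const] at h
  have hp : p + (1 - p) = 1 := by ring
  rw [hp, one_pow] at h
  refine Eq.trans ?_ h.symm
  exact Finset.sum_congr rfl fun Y hY => by
    rw [Finset.card_sdiff_of_subset (Finset.mem_powerset.mp hY)]

lemma prSet_inter_eq {V : Type*} [Fintype V] [DecidableEq V] (p : ℝ) (S T : Finset V)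
    (hT : T ⊆ S) :
    prSet V p (fun X => X ∩ S = T) = p ^ T.card * (1 - p) ^ (S.card - T.card) := by
  classical
  unfold prSet
  rw [← Finset.sum_filter]
  have key : ∑ X ∈ Finset.univ.powerset.filter (fun X : Finset V => X ∩ S = T),
      p ^ X.card * (1 - p) ^ (Fintype.card V - X.card)
    = ∑ Y ∈ Sᶜ.powerset, p ^ T.card * (1 - p) ^ (S.card - T.card) *
        (p ^ Y.card * (1 - p) ^ (Sᶜ.card - Y.card)) := by
    apply Finset.sum_nbij' (fun X => X \ S) (fun Y => T ∪ Y)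
    · intro X hX
      rw [Finset.mem_powerset]
      exact fun u hu => Finset.mem_compl.mpr (Finset.mem_sdiff.mp hu).2
    · intro Y hY
      rw [Finset.mem_powerset] at hY
      have hYS : Disjoint Y S :=
        Finset.disjoint_left.mpr fun u hu hS => Finset.mem_compl.mp (hY hu) hS
      rw [Finset.mem_filter]
      refine ⟨Finset.mem_powerset.mpr (Finset.subset_univ _), ?_⟩
      rw [Finset.union_inter_distrib_right, Finset.inter_eq_left.mpr hT,
        Finset.disjoint_iff_inter_eq_empty.mp hYS, Finset.union_empty]
    · intro X hX
      rw [Finset.mem_filter] at hX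
      rw [← hX.2]
      ext u
      simp only [Finset.mem_union, Finset.mem_inter, Finset.mem_sdiff]
      tauto
    · intro Y hY
      rw [Finset.mem_powerset] at hY
      have hYS : Disjoint Y S :=
        Finset.disjoint_left.mpr fun u hu hS => Finset.mem_compl.mp (hY hu) hS
      rw [Finset.union_sdiff_distrib, Finset.sdiff_eq_empty_iff_subset.mpr hT,
        Finset.empty_union, Finset.sdiff_eq_self_iff_disjoint.mpr hYS]
    · intro X hX
      rw [Finset.mem_filter] at hX
      have hcard : X.card = T.card + (X \ S).card := by
        rw [← hX.2]
        exact (Finset.card_inter_add_card_sdiff X S).symm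
      have h1 : T.card ≤ S.card := Finset.card_le_card hT
      have h2 : (X \ S).card ≤ Sᶜ.card :=
        Finset.card_le_card fun u hu => Finset.mem_compl.mpr (Finset.mem_sdiff.mp hu).2
      have h3 : S.card + Sᶜ.card = Fintype.card V := Finset.card_add_card_compl S
      have hcard2 : Fintype.card V - (T.card + (X \ S).card)
          = (S.card - T.card) + (Sᶜ.card - (X \ S).card) := by omega
      rw [hcard, hcard2, pow_add, pow_add]
      ring
  rw [key, ← Finset.mul_sum, sum_weight_one, mul_one]

/-- Triangle-free `G` with a vertex ordering in which every vertex has at most `d`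
left-neighbors; `X` is `p`-random and `I = {x ∈ X : x has no left-neighbor in X}`.
For `y`, `N_y ⊆ N_G(y)` of size `d` and `L ⊆ N_y` of size `ℓ`: conditioned on
`X ∩ N_y = L`, each `x ∈ L` lies in `I` with probability at least `(1-p)^d`. -/
theorem stmt_10 {V : Type*} [Fintype V] [DecidableEq V] [LinearOrder V]
    (G : SimpleGraph V) [DecidableRel G.Adj] (hG : G.CliqueFree 3)
    (d ℓ : ℕ)
    (hleft : ∀ v : V, ((G.neighborFinset v).filter (fun u => u < v)).card ≤ d)
    (p : ℝ) (hp0 : 0 < p) (hp1 : p < 1)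
    (y : V) (Ny : Finset V) (hNy : Ny ⊆ G.neighborFinset y) (hNyd : Ny.card = d)
    (L : Finset V) (hL : L ⊆ Ny) (hLℓ : L.card = ℓ) (x : V) (hx : x ∈ L) :
    (1 - p) ^ d ≤
      prSet V p (fun X => X ∩ Ny = L ∧
          (x ∈ X ∧ ∀ u ∈ X, G.Adj u x → ¬ u < x)) /
        prSet V p (fun X => X ∩ Ny = L) := by
  classical
  set M := (G.neighborFinset x).filter (fun u => u < x) with hMdef
  have hxNy : x ∈ Ny := hL hx
  have hxy : G.Adj y x := (SimpleGraph.mem_neighborFinset _ _ _).mp (hNy hxNy)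
  -- M is disjoint from Ny by triangle-freeness
  have hdisj : Disjoint M Ny := by
    rw [Finset.disjoint_left]
    intro u huM huNy
    have hux : G.Adj x u :=
      (SimpleGraph.mem_neighborFinset _ _ _).mp (Finset.mem_filter.mp huM).1
    have hyu : G.Adj y u := (SimpleGraph.mem_neighborFinset _ _ _).mp (hNy huNy)
    exact hG {y, x, u} (SimpleGraph.is3Clique_triple_iff.mpr ⟨hxy, hyu, hux⟩)
  -- rewrite the numerator event
  have hEvent : ∀ X : Finset V,
      (X ∩ Ny = L ∧ (x ∈ X ∧ ∀ u ∈ X, G.Adj u x → ¬ u < x)) ↔ X ∩ (Ny ∪ M) = L := by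
    intro X
    constructor
    · rintro ⟨h1, _, h3⟩
      have hXM : X ∩ M = ∅ := by
        rw [Finset.eq_empty_iff_forall_notMem]
        intro u hu
        rw [Finset.mem_inter, hMdef, Finset.mem_filter,
          SimpleGraph.mem_neighborFinset] at hu
        exact h3 u hu.1 hu.2.1.symm hu.2.2
      rw [Finset.inter_union_distrib_left, h1, hXM, Finset.union_empty]
    · intro h
      have hLX : L ⊆ X := by rw [← h]; exact Finset.inter_subset_left
      have h1 : X ∩ Ny = L := by
        apply Finset.Subset.antisymm
        · rw [← h]
          intro u hu
          rw [Finset.mem_inter] at *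
          exact ⟨hu.1, Finset.mem_union_left _ hu.2⟩
        · exact Finset.subset_inter hLX hL
      refine ⟨h1, hLX hx, fun u huX hadj hlt => ?_⟩
      have huM : u ∈ M := by
        rw [hMdef, Finset.mem_filter, SimpleGraph.mem_neighborFinset]
        exact ⟨hadj.symm, hlt⟩
      have : u ∈ L := h ▸ Finset.mem_inter.mpr ⟨huX, Finset.mem_union_right _ huM⟩
      exact Finset.disjoint_left.mp hdisj huM (hL this)
  have hLsub : L ⊆ Ny ∪ M := hL.trans Finset.subset_union_left
  have hnum : prSet V p (fun X => X ∩ Ny = L ∧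
      (x ∈ X ∧ ∀ u ∈ X, G.Adj u x → ¬ u < x))
      = p ^ ℓ * (1 - p) ^ ((Ny ∪ M).card - ℓ) := by
    rw [prSet_congr p _ _ hEvent, prSet_inter_eq p _ _ hLsub, hLℓ]
  have hden : prSet V p (fun X => X ∩ Ny = L)
      = p ^ ℓ * (1 - p) ^ (d - ℓ) := by
    rw [prSet_inter_eq p _ _ hL, hLℓ, hNyd]
  have hld : ℓ ≤ d := hNyd ▸ hLℓ ▸ Finset.card_le_card hL
  have hm : M.card ≤ d := hleft x
  have hcard : (Ny ∪ M).card = d + M.card := by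
    rw [Finset.card_union_of_disjoint hdisj.symm, hNyd]
  have h1p : (0:ℝ) < 1 - p := by linarith
  have hdpos : (0:ℝ) < p ^ ℓ * (1 - p) ^ (d - ℓ) :=
    mul_pos (pow_pos hp0 _) (pow_pos h1p _)
  rw [hnum, hden, hcard]
  have harith : d + M.card - ℓ = (d - ℓ) + M.card := by omega
  rw [harith, pow_add, ← mul_assoc, mul_comm (p ^ ℓ * (1 - p) ^ (d - ℓ)),
    mul_div_assoc, div_self (ne_of_gt hdpos), mul_one]
  exact pow_le_pow_of_le_one (le_of_lt h1p) (by linarith) hm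
end

section
/- With the setup of the previous claim (conditioned on X ∩ N_y = L, |L| = ℓ, and (1-p)^d ≥ 0.35): the conditional probability that |L ∩ I| ≥ ℓ/10 is greater than 1/5. -/
lemma sum_pow_powerset {V : Type*} [DecidableEq V] (T : Finset V) (a b : ℝ) :
    ∑ S ∈ T.powerset, a ^ S.card * b ^ (T.card - S.card) = (a + b) ^ T.card := by
  induction T using Finset.induction_on with
  | empty => simp
  | @insert v T ha ih =>
    rw [Finset.sum_powerset_insert ha]
    have h1 : ∀ S ∈ T.powerset, a ^ S.card * b ^ ((insert v T).card - S.card)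
        = b * (a ^ S.card * b ^ (T.card - S.card)) := by
      intro S hS
      rw [Finset.card_insert_of_notMem ha]
      have : S.card ≤ T.card := Finset.card_le_card (Finset.mem_powerset.1 hS)
      rw [show T.card + 1 - S.card = (T.card - S.card) + 1 by omega]
      ring
    have h2 : ∀ S ∈ T.powerset, a ^ (insert v S).card * b ^ ((insert v T).card - (insert v S).card)
        = a * (a ^ S.card * b ^ (T.card - S.card)) := by
      intro S hS
      have hvS : v ∉ S := fun hv => ha (Finset.mem_powerset.1 hS hv)
      rw [Finset.card_insert_of_notMem ha, Finset.card_insert_of_notMem hvS]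
      have : S.card ≤ T.card := Finset.card_le_card (Finset.mem_powerset.1 hS)
      rw [show T.card + 1 - (S.card + 1) = T.card - S.card by omega]
      ring
    rw [Finset.sum_congr rfl h1, Finset.sum_congr rfl h2, ← Finset.mul_sum, ← Finset.mul_sum,
      ih, Finset.card_insert_of_notMem ha, pow_succ]
    ring

lemma sum_powerset_union {V : Type*} [DecidableEq V] {U T : Finset V} (h : Disjoint U T)
    (f : Finset V → ℝ) :
    ∑ X ∈ (U ∪ T).powerset, f X = ∑ A ∈ U.powerset, ∑ B ∈ T.powerset, f (A ∪ B) := by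
  induction U using Finset.induction_on generalizing f with
  | empty => simp
  | @insert v U ha ih =>
    have hd : Disjoint U T := h.mono_left (Finset.subset_insert v U)
    have hvT : v ∉ T := fun hv => (Finset.disjoint_left.1 h) (Finset.mem_insert_self v U) hv
    have hvUT : v ∉ U ∪ T := by simp [ha, hvT]
    rw [Finset.insert_union, Finset.sum_powerset_insert hvUT, Finset.sum_powerset_insert ha,
      ih hd f, ih hd (fun X => f (insert v X))]
    congr 1
    refine Finset.sum_congr rfl fun A hA => Finset.sum_congr rfl fun B hB => ?_
    rw [Finset.insert_union]

lemma markov_aux {α : Type*} (s : Finset α) (w Z : α → ℝ)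
    (hw : ∀ a ∈ s, 0 ≤ w a) (hZ : ∀ a ∈ s, 0 ≤ Z a) (t : ℝ) (ht : 0 < t)
    (pred : α → Prop) [DecidablePred pred] (hpred : ∀ a ∈ s, pred a → t ≤ Z a) :
    ∑ a ∈ s.filter pred, w a ≤ (∑ a ∈ s, w a * Z a) / t := by
  rw [le_div_iff₀ ht]
  calc (∑ a ∈ s.filter pred, w a) * t = ∑ a ∈ s.filter pred, w a * t := by rw [Finset.sum_mul]
    _ ≤ ∑ a ∈ s.filter pred, w a * Z a := by
        refine Finset.sum_le_sum fun a ha => ?_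
        have h := Finset.mem_filter.1 ha
        exact mul_le_mul_of_nonneg_left (hpred a h.1 h.2) (hw a h.1)
    _ ≤ ∑ a ∈ s, w a * Z a := Finset.sum_le_sum_of_subset_of_nonneg (Finset.filter_subset _ _)
        (fun a ha _ => mul_nonneg (hw a ha) (hZ a ha))


lemma prSet_cond {V : Type*} [Fintype V] [DecidableEq V] (p : ℝ)
    (Ny L : Finset V) (hL : L ⊆ Ny)
    (Q : Finset V → Prop) [DecidablePred Q] :
    prSet V p (fun X => X ∩ Ny = L ∧ Q X)
      = (p ^ L.card * (1 - p) ^ (Ny.card - L.card)) *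
        ∑ B ∈ ((Finset.univ : Finset V) \ Ny).powerset,
          if Q (L ∪ B) then
            p ^ B.card * (1 - p) ^ (((Finset.univ : Finset V) \ Ny).card - B.card) else 0 := by
  classical
  set C := (Finset.univ : Finset V) \ Ny with hC
  have huniv : Ny ∪ C = Finset.univ := Finset.union_sdiff_of_subset (Finset.subset_univ Ny)
  have hdisj : Disjoint Ny C := Finset.disjoint_sdiff
  have hn : Fintype.card V = Ny.card + C.card := by
    rw [← Finset.card_univ, ← huniv, Finset.card_union_of_disjoint hdisj]
  have hinter : ∀ A ∈ Ny.powerset, ∀ B ∈ C.powerset, (A ∪ B) ∩ Ny = A := by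
    intro A hA B hB
    have hBNy : Disjoint B Ny :=
      Finset.disjoint_of_subset_left (Finset.mem_powerset.1 hB) Finset.sdiff_disjoint
    rw [Finset.union_inter_distrib_right, Finset.inter_eq_left.2 (Finset.mem_powerset.1 hA),
      Finset.disjoint_iff_inter_eq_empty.1 hBNy, Finset.union_empty]
  unfold prSet
  rw [show (Finset.univ : Finset V) = Ny ∪ C from huniv.symm, sum_powerset_union hdisj]
  rw [Finset.sum_eq_single_of_mem L (Finset.mem_powerset.2 hL)]
  · rw [Finset.mul_sum]
    refine Finset.sum_congr rfl fun B hB => ?_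
    have hBC : B ⊆ C := Finset.mem_powerset.1 hB
    have hint : (L ∪ B) ∩ Ny = L := hinter L (Finset.mem_powerset.2 hL) B hB
    have hdLB : Disjoint L B :=
      Finset.disjoint_of_subset_right hBC (Finset.disjoint_sdiff.mono_left hL)
    have hcard : (L ∪ B).card = L.card + B.card := Finset.card_union_of_disjoint hdLB
    have hLc : L.card ≤ Ny.card := Finset.card_le_card hL
    have hBc : B.card ≤ C.card := Finset.card_le_card hBC
    rw [if_congr (show ((L ∪ B) ∩ Ny = L ∧ Q (L ∪ B)) ↔ Q (L ∪ B) by simp [hint]) rfl rfl]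
    by_cases hQ : Q (L ∪ B)
    · rw [if_pos hQ, if_pos hQ, hcard,
        show Fintype.card V - (L.card + B.card)
          = (Ny.card - L.card) + (C.card - B.card) by omega, pow_add, pow_add]
      ring
    · simp [hQ]
  · intro A hA hne
    refine Finset.sum_eq_zero fun B hB => ?_
    rw [if_neg]
    rintro ⟨h1, -⟩
    exact hne (((hinter A hA B hB).symm.trans h1))

/-- With the setup of the previous claim (triangle-free `G`, ordering with at most `d`
left-neighbors per vertex, `p = 1/d`, `(1-p)^d ≥ 0.35`, `L ⊆ N_y` of size `ℓ ≥ 1`):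
conditioned on `X ∩ N_y = L`, the probability that `|L ∩ I| ≥ ℓ/10` exceeds `1/5`. -/
theorem stmt_11 {V : Type*} [Fintype V] [DecidableEq V] [LinearOrder V]
    (G : SimpleGraph V) [DecidableRel G.Adj] (hG : G.CliqueFree 3)
    (d ℓ : ℕ) (hd : 1 ≤ d) (hℓ : 1 ≤ ℓ)
    (hleft : ∀ v : V, ((G.neighborFinset v).filter (fun u => u < v)).card ≤ d)
    (p : ℝ) (hp : p = 1 / (d : ℝ)) (hp35 : (0.35 : ℝ) ≤ (1 - p) ^ d)
    (y : V) (Ny : Finset V) (hNy : Ny ⊆ G.neighborFinset y) (hNyd : Ny.card = d)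
    (L : Finset V) (hL : L ⊆ Ny) (hLℓ : L.card = ℓ) :
    (1 : ℝ) / 5 <
      prSet V p (fun X => X ∩ Ny = L ∧
          (ℓ : ℝ) / 10 ≤
            ((L.filter (fun x => x ∈ X ∧ ∀ u ∈ X, G.Adj u x → ¬ u < x)).card : ℝ)) /
        prSet V p (fun X => X ∩ Ny = L) := by
  classical
  set C := (Finset.univ : Finset V) \ Ny with hC
  set wC : Finset V → ℝ := fun B => p ^ B.card * (1 - p) ^ (C.card - B.card) with hwC
  have hd0 : (0:ℝ) < d := by exact_mod_cast hd
  have hℓ0 : (0:ℝ) < ℓ := by exact_mod_cast hℓ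
  have hp0 : 0 < p := by rw [hp]; positivity
  have hp1 : p ≤ 1 := by rw [hp, div_le_one hd0]; exact_mod_cast hd
  have h1p0 : 0 < 1 - p := by
    rcases eq_or_lt_of_le (sub_nonneg.2 hp1) with h | h
    · exfalso
      have : (1 - p) ^ d = 0 := by rw [← h]; exact zero_pow (by omega)
      rw [this] at hp35; norm_num at hp35
    · exact h
  have h1p1 : 1 - p ≤ 1 := by linarith
  have wCnn : ∀ B : Finset V, 0 ≤ wC B := fun B => by
    have := h1p0.le; have := hp0.le; positivity
  have htotal : ∀ (T : Finset V),
      ∑ B ∈ T.powerset, p ^ B.card * (1 - p) ^ (T.card - B.card) = 1 := by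
    intro T; rw [sum_pow_powerset]; norm_num
  have htotalC : ∑ B ∈ C.powerset, wC B = 1 := htotal C
  -- triangle-free: Ny is independent
  have htri : ∀ u ∈ Ny, ∀ x ∈ Ny, ¬ G.Adj u x := by
    intro u hu x hx hadj
    exact hG {u, x, y} (SimpleGraph.is3Clique_triple_iff.2
      ⟨hadj, ((G.mem_neighborFinset y u).1 (hNy hu)).symm,
        ((G.mem_neighborFinset y x).1 (hNy hx)).symm⟩)
  -- the bad count
  set Z : Finset V → ℕ := fun B => (L.filter (fun x => ∃ u ∈ B, G.Adj u x ∧ u < x)).card with hZdef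
  have hZle : ∀ B, Z B ≤ ℓ := fun B => hLℓ ▸ Finset.card_filter_le _ _
  have hfilter : ∀ B : Finset V,
      L.filter (fun x => x ∈ L ∪ B ∧ ∀ u ∈ L ∪ B, G.Adj u x → ¬ u < x)
        = L.filter (fun x => ¬ ∃ u ∈ B, G.Adj u x ∧ u < x) := by
    intro B
    refine Finset.filter_congr fun x hx => ?_
    constructor
    · rintro ⟨-, h2⟩
      rintro ⟨u, hu, hadj, hlt⟩
      exact h2 u (Finset.mem_union_right _ hu) hadj hlt
    · intro h
      refine ⟨Finset.mem_union_left _ hx, fun u hu hadj hlt => ?_⟩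
      rcases Finset.mem_union.1 hu with h' | h'
      · exact htri u (hL h') x (hL hx) hadj
      · exact h ⟨u, h', hadj, hlt⟩
  have hcardsplit : ∀ B : Finset V,
      (L.filter (fun x => ¬ ∃ u ∈ B, G.Adj u x ∧ u < x)).card = ℓ - Z B := by
    intro B
    have h := Finset.card_filter_add_card_filter_not
      (s := L) (p := fun x => ∃ u ∈ B, G.Adj u x ∧ u < x)
    rw [hLℓ] at h
    simp only [hZdef]
    omega
  -- per-vertex bad probability
  have hPbad : ∀ x ∈ L,
      (∑ B ∈ C.powerset, if (∃ u ∈ B, G.Adj u x ∧ u < x) then wC B else 0) ≤ 0.65 := by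
    intro x hx
    set A := C.filter (fun u => G.Adj u x ∧ u < x) with hA
    have hAC : A ⊆ C := Finset.filter_subset _ _
    have hAd : A.card ≤ d := by
      refine le_trans (Finset.card_le_card ?_) (hleft x)
      intro u hu
      rw [hA, Finset.mem_filter] at hu
      rw [Finset.mem_filter, SimpleGraph.mem_neighborFinset]
      exact ⟨hu.2.1.symm, hu.2.2⟩
    have hsplit : (∑ B ∈ C.powerset, if (∃ u ∈ B, G.Adj u x ∧ u < x) then wC B else 0)
        + (∑ B ∈ C.powerset, if ¬(∃ u ∈ B, G.Adj u x ∧ u < x) then wC B else 0) = 1 := by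
      rw [← Finset.sum_add_distrib, ← htotalC]
      refine Finset.sum_congr rfl fun B _ => ?_
      by_cases h : (∃ u ∈ B, G.Adj u x ∧ u < x) <;> simp [h]
    have hcompl : (∑ B ∈ C.powerset, if ¬(∃ u ∈ B, G.Adj u x ∧ u < x) then wC B else 0)
        = (1 - p) ^ A.card := by
      have hiff : ∀ B ∈ C.powerset, (¬ ∃ u ∈ B, G.Adj u x ∧ u < x) ↔ B ⊆ C \ A := by
        intro B hB
        have hBC : B ⊆ C := Finset.mem_powerset.1 hB
        constructor
        · intro h u hu
          rw [Finset.mem_sdiff]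
          refine ⟨hBC hu, fun hA' => ?_⟩
          rw [hA, Finset.mem_filter] at hA'
          exact h ⟨u, hu, hA'.2⟩
        · rintro h ⟨u, hu, hadj, hlt⟩
          have := h hu
          rw [Finset.mem_sdiff] at this
          exact this.2 (by rw [hA, Finset.mem_filter]; exact ⟨hBC hu, hadj, hlt⟩)
      rw [Finset.sum_congr rfl fun B hB => if_congr (hiff B hB) rfl rfl, ← Finset.sum_filter]
      have hps : C.powerset.filter (fun B => B ⊆ C \ A) = (C \ A).powerset := by
        ext B
        simp only [Finset.mem_filter, Finset.mem_powerset]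
        exact ⟨fun h => h.2, fun h => ⟨h.trans (Finset.sdiff_subset), h⟩⟩
      rw [hps]
      have hcc : C.card = A.card + (C \ A).card := by
        rw [Finset.card_sdiff_of_subset hAC]
        have := Finset.card_le_card hAC
        omega
      have heq : ∑ B ∈ (C \ A).powerset, wC B
          = (1 - p) ^ A.card * ∑ B ∈ (C \ A).powerset,
              p ^ B.card * (1 - p) ^ ((C \ A).card - B.card) := by
        rw [Finset.mul_sum]
        refine Finset.sum_congr rfl fun B hB => ?_
        have hBc : B.card ≤ (C \ A).card := Finset.card_le_card (Finset.mem_powerset.1 hB)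
        show p ^ B.card * (1 - p) ^ (C.card - B.card) = _
        rw [show C.card - B.card = A.card + ((C \ A).card - B.card) by omega, pow_add]
        ring
      rw [heq, htotal, mul_one]
    have hge : (0.35:ℝ) ≤ (1 - p) ^ A.card :=
      le_trans hp35 (pow_le_pow_of_le_one h1p0.le h1p1 hAd)
    linarith
  -- expectation bound
  have hZsum : ∀ B : Finset V, (Z B : ℝ)
      = ∑ x ∈ L, if (∃ u ∈ B, G.Adj u x ∧ u < x) then (1:ℝ) else 0 := by
    intro B
    rw [hZdef]
    simp only [Finset.card_filter]
    push_cast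
    rfl
  have hE : ∑ B ∈ C.powerset, wC B * (Z B : ℝ) ≤ 0.65 * ℓ := by
    calc ∑ B ∈ C.powerset, wC B * (Z B : ℝ)
        = ∑ B ∈ C.powerset, ∑ x ∈ L, (if (∃ u ∈ B, G.Adj u x ∧ u < x) then wC B else 0) := by
          refine Finset.sum_congr rfl fun B _ => ?_
          rw [hZsum B, Finset.mul_sum]
          refine Finset.sum_congr rfl fun x _ => ?_
          by_cases h : (∃ u ∈ B, G.Adj u x ∧ u < x) <;> simp [h]
      _ = ∑ x ∈ L, ∑ B ∈ C.powerset, (if (∃ u ∈ B, G.Adj u x ∧ u < x) then wC B else 0) :=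
          Finset.sum_comm
      _ ≤ ∑ _x ∈ L, (0.65:ℝ) := Finset.sum_le_sum hPbad
      _ = 0.65 * ℓ := by rw [Finset.sum_const, hLℓ, nsmul_eq_mul, mul_comm]
  -- the event predicate
  set Qp : Finset V → Prop := fun X => (ℓ : ℝ) / 10 ≤
      ((L.filter (fun x => x ∈ X ∧ ∀ u ∈ X, G.Adj u x → ¬ u < x)).card : ℝ) with hQp
  have hQcast : ∀ B : Finset V,
      ((L.filter (fun x => x ∈ L ∪ B ∧ ∀ u ∈ L ∪ B, G.Adj u x → ¬ u < x)).card : ℝ)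
        = (ℓ : ℝ) - Z B := by
    intro B
    rw [hfilter B, hcardsplit B, Nat.cast_sub (hZle B)]
  -- Markov
  have hbadsum : (∑ B ∈ C.powerset, if ¬ Qp (L ∪ B) then wC B else 0) ≤ 13 / 18 := by
    rw [← Finset.sum_filter]
    have ht : (0:ℝ) < 9 * ℓ / 10 := by positivity
    refine le_trans (markov_aux C.powerset wC (fun B => (Z B : ℝ))
      (fun B _ => wCnn B) (fun B _ => Nat.cast_nonneg _) (9 * ℓ / 10) ht _ ?_) ?_
    · intro B _ hnQ
      rw [hQp] at hnQ
      simp only [hQcast B, not_le] at hnQ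
      linarith
    · calc (∑ B ∈ C.powerset, wC B * (Z B : ℝ)) / (9 * ℓ / 10)
          ≤ (0.65 * ℓ) / (9 * ℓ / 10) := by
            exact div_le_div_of_nonneg_right hE ht.le
        _ = 13 / 18 := by
            field_simp
            ring
  have hqsplit : (∑ B ∈ C.powerset, if Qp (L ∪ B) then wC B else 0)
      + (∑ B ∈ C.powerset, if ¬ Qp (L ∪ B) then wC B else 0) = 1 := by
    rw [← Finset.sum_add_distrib, ← htotalC]
    refine Finset.sum_congr rfl fun B _ => ?_
    by_cases h : Qp (L ∪ B) <;> simp [h]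
  have hq : 5 / 18 ≤ ∑ B ∈ C.powerset, if Qp (L ∪ B) then wC B else 0 := by linarith
  -- assembly
  have hnum : prSet V p (fun X => X ∩ Ny = L ∧ Qp X)
      = (p ^ ℓ * (1 - p) ^ (d - ℓ)) * ∑ B ∈ C.powerset, if Qp (L ∪ B) then wC B else 0 := by
    rw [prSet_cond p Ny L hL Qp, hLℓ, hNyd]
  have hden : prSet V p (fun X => X ∩ Ny = L) = p ^ ℓ * (1 - p) ^ (d - ℓ) := by
    rw [prSet_congr p _ (fun X => X ∩ Ny = L ∧ (fun _ : Finset V => True) X)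
      (fun X => by simp), prSet_cond p Ny L hL (fun _ => True), hLℓ, hNyd]
    simp only [if_true]
    rw [htotal C, mul_one]
  have hw0 : (0:ℝ) < p ^ ℓ * (1 - p) ^ (d - ℓ) := by positivity
  show (1 : ℝ) / 5 < prSet V p (fun X => X ∩ Ny = L ∧ Qp X) / prSet V p (fun X => X ∩ Ny = L)
  rw [hnum, hden, mul_div_cancel_left₀ _ hw0.ne']
  linarith
end
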